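/- There is an antichain of cardinality 2^{2^{ℵ₀}} in the Muchnik lattice: there exists a family of mass problems of cardinality 2^{2^{ℵ₀}} whose members are pairwise Muchnik incomparable. -/

import Mathlib

open Cardinal

namespace Muchnik

/-- Oracle partial recursiveness: `f` is partial recursive relative to the oracle `g`. -/
inductive RecursiveIn (g : ℕ → ℕ) : (ℕ →. ℕ) → Prop
  | oracle : RecursiveIn g ↑g
  | zero : RecursiveIn g (pure 0)
  | succ : RecursiveIn g ↑Nat.succ
  | left : RecursiveIn g ↑fun n : ℕ => n.unpair.1
  | right : RecursiveIn g ↑fun n : ℕ => n.unpair.2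
  | pair {f h} : RecursiveIn g f → RecursiveIn g h →
      RecursiveIn g fun n => Nat.pair <$> f n <*> h n
  | comp {f h} : RecursiveIn g f → RecursiveIn g h →
      RecursiveIn g fun n => h n >>= f
  | prec {f h} : RecursiveIn g f → RecursiveIn g h →
      RecursiveIn g (Nat.unpaired fun a n =>
        n.rec (f a) fun y IH => do let i ← IH; h (Nat.pair a (Nat.pair y i)))
  | rfind {f} : RecursiveIn g f →
      RecursiveIn g fun a => Nat.rfind fun n => (fun m => m = 0) <$> f (Nat.pair a n)

/-- Turing reducibility `f ≤_T g` for elements of Baire space. -/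
def TuringLe (f g : ℕ → ℕ) : Prop := RecursiveIn g ↑f

/-- Strict Turing reducibility `f <_T g`. -/
def TuringLt (f g : ℕ → ℕ) : Prop := TuringLe f g ∧ ¬ TuringLe g f

/-- Turing equivalence `f ≡_T g`. -/
def TuringEquiv (f g : ℕ → ℕ) : Prop := TuringLe f g ∧ TuringLe g f

/-- Turing incomparability `f |_T g`. -/
def TuringIncomp (f g : ℕ → ℕ) : Prop := ¬ TuringLe f g ∧ ¬ TuringLe g f

/-- Muchnik reducibility `A ≤_w B` between mass problems. -/
def MuchnikLe (A B : Set (ℕ → ℕ)) : Prop := ∀ f ∈ B, ∃ g ∈ A, TuringLe g f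

/-- Strict Muchnik reducibility `A <_w B`. -/
def MuchnikLt (A B : Set (ℕ → ℕ)) : Prop := MuchnikLe A B ∧ ¬ MuchnikLe B A

/-- Muchnik equivalence `A ≡_w B`. -/
def MuchnikEquiv (A B : Set (ℕ → ℕ)) : Prop := MuchnikLe A B ∧ MuchnikLe B A

/-- The strict Turing upper cone `C'(f) = {g : f <_T g}`. -/
def cone (f : ℕ → ℕ) : Set (ℕ → ℕ) := {g | TuringLt f g}

/-- The recursive join `f ⊕ g`: `(f ⊕ g)(2x) = f(x)` and `(f ⊕ g)(2x+1) = g(x)`. -/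
def join (f g : ℕ → ℕ) : ℕ → ℕ := fun n => if n % 2 = 0 then f (n / 2) else g (n / 2)

/-- The join `A + B` of mass problems. -/
def joinSet (A B : Set (ℕ → ℕ)) : Set (ℕ → ℕ) := {h | ∃ f ∈ A, ∃ g ∈ B, h = join f g}

/-- Identification of `2^ω` with a subset of Baire space. -/
def ofBool (X : ℕ → Bool) : ℕ → ℕ := fun n => if X n then 1 else 0


/-!
A finite-extension construction yields a perfect tree of conditions (cylinders in Baire space)
whose branches `branch X`, `X : ℕ → Bool`, are pairwise Turing incomparable. At level `t`, each
oracle program `c` among the first `t` is played against each ordered pair of distinct nodes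
`p ≠ q`: either some extension of the condition at `q` forces a value of `Φ_c` at an argument `n`
not yet fixed at `p`, and we extend `p` to disagree there; or there is none, and then, by the use
principle, `Φ_c^g` is undefined at every such argument for every `g` through `q`. Either way `Φ_c`
with an oracle through `q` computes no function through `p`.

Inside `(ℕ → Bool) × Bool ≃ ℕ → Bool` the graphs of the `2 ^ 2 ^ ℵ₀` functions
`(ℕ → Bool) → Bool` form an antichain for inclusion. Their images under `branch` are pairwise
Muchnik incomparable: when `B ⊄ A`, a point of `B \ A` computes no point of `A`.
-/

end Muchnik

open Filter Topology

theorem PiNat.exists_cylinder_subset_of_mem_nhds {E : ℕ → Type*} [∀ n, TopologicalSpace (E n)]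
    [∀ n, DiscreteTopology (E n)] {x : ∀ n, E n} {s : Set (∀ n, E n)} (hs : s ∈ 𝓝 x) :
    ∃ k, PiNat.cylinder x k ⊆ s := by
  obtain ⟨_, ⟨y, k, rfl⟩, hx, hsub⟩ := (PiNat.isTopologicalBasis_cylinders E).mem_nhds_iff.1 hs
  exact ⟨k, by rwa [PiNat.mem_cylinder_iff_eq.1 hx]⟩

theorem Set.exists_isAntichain_card_eq_two_pow (α : Type*) [Infinite α] :
    ∃ 𝒜 : Set (Set α), #𝒜 = 2 ^ #α ∧ IsAntichain (· ⊆ ·) 𝒜 := by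
  obtain ⟨e⟩ : Nonempty (α × Bool ≃ α) := by
    refine Cardinal.eq.1 ?_
    simpa using Cardinal.mul_eq_left (Cardinal.aleph0_le_mk α)
      ((Cardinal.natCast_lt_aleph0 (n := 2)).le.trans (Cardinal.aleph0_le_mk α)) two_ne_zero
  have hgraph : ∀ χ χ' : α → Bool, Function.graph χ ⊆ Function.graph χ' → χ = χ' :=
    fun χ χ' h => funext fun a => (h (Function.mem_graph.2 rfl) : χ' a = χ a).symm
  have hinj : Function.Injective fun χ : α → Bool => e '' Function.graph χ :=
    (Set.image_injective.2 e.injective).comp Function.graph_injective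
  refine ⟨Set.range fun χ : α → Bool => e '' Function.graph χ, ?_, ?_⟩
  · rw [Cardinal.mk_range_eq _ hinj]
    simp
  · rintro _ ⟨χ, rfl⟩ _ ⟨χ', rfl⟩ hne hsub
    exact hne (congrArg (fun χ => e '' Function.graph χ)
      (hgraph χ χ' ((Set.image_subset_image_iff e.injective).1 hsub)))

namespace Muchnik

/-- Programs for the clauses of `RecursiveIn`, so that one program can be run on every oracle. -/
inductive Code : Type
  | oracle : Code
  | zero : Code
  | succ : Code
  | left : Code
  | right : Code
  | pair : Code → Code → Code
  | comp : Code → Code → Code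
  | prec : Code → Code → Code
  | rfind : Code → Code
  deriving Inhabited, Countable

namespace Code

def eval (g : ℕ → ℕ) : Code → ℕ →. ℕ
  | oracle => ↑g
  | zero => pure 0
  | succ => ↑Nat.succ
  | left => ↑fun n : ℕ => n.unpair.1
  | right => ↑fun n : ℕ => n.unpair.2
  | pair cf ch => fun n => Nat.pair <$> eval g cf n <*> eval g ch n
  | comp cf ch => fun n => eval g ch n >>= eval g cf
  | prec cf ch => Nat.unpaired fun a n =>
      n.rec (eval g cf a) fun y IH => do let i ← IH; eval g ch (Nat.pair a (Nat.pair y i))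
  | rfind cf => fun a => Nat.rfind fun n => (fun m => m = 0) <$> eval g cf (Nat.pair a n)

theorem eventually_mem_eval {g : ℕ → ℕ} (c : Code) {n m : ℕ} (h : m ∈ c.eval g n) :
    ∀ᶠ g' in 𝓝 g, m ∈ c.eval g' n := by
  induction c generalizing n m with
  | oracle =>
    simp only [eval, PFun.coe_val, Part.mem_some_iff] at h ⊢
    filter_upwards [(continuous_apply n).continuousAt.eventually_mem
      ((isOpen_discrete {g n}).mem_nhds rfl)] with g' hg'
    exact h.trans hg'.symm
  | zero | succ | left | right => exact .of_forall fun _ => h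
  | pair cf ch ihf ihh =>
    simp only [eval, Seq.seq, Part.map_eq_map, Part.mem_bind_iff, Part.mem_map_iff] at h ⊢
    obtain ⟨_, ⟨a, ha, rfl⟩, b, hb, rfl⟩ := h
    filter_upwards [ihf ha, ihh hb] with g' ha' hb'
    exact ⟨_, ⟨a, ha', rfl⟩, b, hb', rfl⟩
  | comp cf ch ihf ihh =>
    obtain ⟨a, ha, hm⟩ := Part.mem_bind_iff.1 h
    filter_upwards [ihh ha, ihf hm] with g' ha' hm'
    exact Part.mem_bind_iff.2 ⟨a, ha', hm'⟩
  | prec cf ch ihf ihh =>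
    simp only [eval, Nat.unpaired] at h ⊢
    generalize n.unpair.1 = a at h ⊢
    generalize n.unpair.2 = b at h ⊢
    induction b generalizing m with
    | zero => exact ihf h
    | succ y ih =>
      obtain ⟨i, hi, hm⟩ := Part.mem_bind_iff.1 h
      filter_upwards [ih hi, ihh hm] with g' hi' hm'
      exact Part.mem_bind_iff.2 ⟨i, hi', hm'⟩
  | rfind cf ih =>
    simp only [eval] at h ⊢
    obtain ⟨hm, hmin⟩ := Nat.mem_rfind.1 h
    obtain ⟨z, hz, hz0⟩ := (Part.mem_map_iff _).1 hm
    have hmin' : ∀ j ∈ Finset.range m, ∀ᶠ g' in 𝓝 g,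
        false ∈ (fun k => decide (k = 0)) <$> cf.eval g' (Nat.pair n j) := by
      intro j hj
      obtain ⟨w, hw, hw0⟩ := (Part.mem_map_iff _).1 (hmin (Finset.mem_range.1 hj))
      filter_upwards [ih hw] with g' hw'
      exact (Part.mem_map_iff _).2 ⟨w, hw', hw0⟩
    filter_upwards [ih hz, (Finset.range m).eventually_all.2 hmin'] with g' hz' hmin''
    exact Nat.mem_rfind.2 ⟨(Part.mem_map_iff _).2 ⟨z, hz', hz0⟩,
      fun hj => hmin'' _ (Finset.mem_range.2 hj)⟩

noncomputable def enum : ℕ → Code := (exists_surjective_nat Code).choose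

theorem enum_surjective : Function.Surjective enum := (exists_surjective_nat Code).choose_spec

end Code

theorem RecursiveIn.exists_code {g : ℕ → ℕ} {f : ℕ →. ℕ} (h : RecursiveIn g f) :
    ∃ c : Code, c.eval g = f := by
  induction h with
  | oracle => exact ⟨.oracle, rfl⟩
  | zero => exact ⟨.zero, rfl⟩
  | succ => exact ⟨.succ, rfl⟩
  | left => exact ⟨.left, rfl⟩
  | right => exact ⟨.right, rfl⟩
  | pair _ _ ihf ihh =>
    obtain ⟨cf, rfl⟩ := ihf; obtain ⟨ch, rfl⟩ := ihh
    exact ⟨.pair cf ch, rfl⟩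
  | comp _ _ ihf ihh =>
    obtain ⟨cf, rfl⟩ := ihf; obtain ⟨ch, rfl⟩ := ihh
    exact ⟨.comp cf ch, rfl⟩
  | prec _ _ ihf ihh =>
    obtain ⟨cf, rfl⟩ := ihf; obtain ⟨ch, rfl⟩ := ihh
    exact ⟨.prec cf ch, rfl⟩
  | rfind _ ihf =>
    obtain ⟨cf, rfl⟩ := ihf
    exact ⟨.rfind cf, rfl⟩

theorem turingLe_refl (f : ℕ → ℕ) : TuringLe f f := RecursiveIn.oracle

/-- The cylinder of functions agreeing with `val` below `len`; the values of `val` from `len` on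
play no role. -/
structure Condition where
  len : ℕ
  val : ℕ → ℕ

namespace Condition

def cyl (σ : Condition) : Set (ℕ → ℕ) := PiNat.cylinder σ.val σ.len

instance : Preorder Condition where
  le σ τ := σ.len ≤ τ.len ∧ τ.cyl ⊆ σ.cyl
  le_refl _ := ⟨le_rfl, subset_rfl⟩
  le_trans _ _ _ h h' := ⟨h.1.trans h'.1, h'.2.trans h.2⟩

theorem len_le_of_le {σ τ : Condition} (h : σ ≤ τ) : σ.len ≤ τ.len := h.1

theorem cyl_subset_of_le {σ τ : Condition} (h : σ ≤ τ) : τ.cyl ⊆ σ.cyl := h.2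

theorem val_mem_cyl (σ : Condition) : σ.val ∈ σ.cyl := PiNat.self_mem_cylinder _ _

def lengthen (σ : Condition) : Condition := ⟨σ.len + 1, σ.val⟩

theorem le_lengthen (σ : Condition) : σ ≤ σ.lengthen :=
  ⟨Nat.le_succ _, PiNat.cylinder_anti _ (Nat.le_succ _)⟩

def limit (σ : ℕ → Condition) : ℕ → ℕ := fun n => (σ (n + 1)).val n

theorem limit_mem_cyl {σ : ℕ → Condition} (hσ : Monotone σ) (hlen : ∀ t, t ≤ (σ t).len)
    (t : ℕ) : limit σ ∈ (σ t).cyl := by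
  intro i hi
  have hs := (σ (max t (i + 1))).val_mem_cyl
  calc limit σ i = (σ (max t (i + 1))).val i :=
        (cyl_subset_of_le (hσ (le_max_right _ _)) hs i (hlen (i + 1))).symm
    _ = (σ t).val i := cyl_subset_of_le (hσ (le_max_left _ _)) hs i hi

def Forces (τ : Condition) (c : Code) (n m : ℕ) : Prop := ∀ g ∈ τ.cyl, m ∈ c.eval g n

def Diagonalizes (c : Code) (σ τ : Condition) : Prop :=
  ∀ f ∈ σ.cyl, ∀ g ∈ τ.cyl, c.eval g ≠ ↑f

theorem Diagonalizes.mono {c : Code} {σ σ' τ τ' : Condition} (h : Diagonalizes c σ τ)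
    (hσ : σ ≤ σ') (hτ : τ ≤ τ') : Diagonalizes c σ' τ' :=
  fun f hf g hg => h f (cyl_subset_of_le hσ hf) g (cyl_subset_of_le hτ hg)

theorem exists_le_diagonalizes (c : Code) (σ τ : Condition) :
    ∃ π : Condition × Condition, σ ≤ π.1 ∧ τ ≤ π.2 ∧ Diagonalizes c π.1 π.2 := by
  by_cases h : ∃ n ≥ σ.len, ∃ τ' ≥ τ, ∃ m, τ'.Forces c n m
  · obtain ⟨n, hn, τ', hτ', m, hm⟩ := h
    set σ' : Condition := ⟨n + 1, Function.update σ.val n (m + 1)⟩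
    have hσ' : ∀ f ∈ σ'.cyl, ∀ i ≤ n, f i = Function.update σ.val n (m + 1) i :=
      fun f hf i hi => hf i (Nat.lt_succ_of_le hi)
    refine ⟨(σ', τ'), ⟨Nat.le_succ_of_le hn, fun f hf i hi => ?_⟩, hτ', fun f hf g hg he => ?_⟩
    · rw [hσ' f hf i (by omega), Function.update_of_ne (by omega)]
    · have hgn : m ∈ c.eval g n := hm g hg
      rw [he, PFun.coe_val, Part.mem_some_iff, hσ' f hf n le_rfl, Function.update_self] at hgn
      omega
  · -- a value of `Φ_c^g` at `σ.len` would be forced by an extension of `τ`, by the use principle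
    refine ⟨(σ, τ), le_rfl, le_rfl, fun f _ g hg he => h ?_⟩
    have hmem : f σ.len ∈ c.eval g σ.len := by rw [he]; exact Part.mem_some _
    obtain ⟨k, hk⟩ := PiNat.exists_cylinder_subset_of_mem_nhds (c.eventually_mem_eval hmem)
    refine ⟨σ.len, le_rfl, ⟨max k τ.len, g⟩, ⟨le_max_right _ _, ?_⟩, f σ.len, ?_⟩
    · change PiNat.cylinder g (max k τ.len) ⊆ PiNat.cylinder τ.val τ.len
      rw [← PiNat.mem_cylinder_iff_eq.1 hg]
      exact PiNat.cylinder_anti _ (le_max_right _ _)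
    · exact fun g' hg' => hk (PiNat.cylinder_anti _ (le_max_left _ _) hg')

noncomputable def diagonalize (c : Code) (σ τ : Condition) : Condition × Condition :=
  (exists_le_diagonalizes c σ τ).choose

theorem diagonalize_spec (c : Code) (σ τ : Condition) :
    σ ≤ (diagonalize c σ τ).1 ∧ τ ≤ (diagonalize c σ τ).2 ∧
      Diagonalizes c (diagonalize c σ τ).1 (diagonalize c σ τ).2 :=
  (exists_le_diagonalizes c σ τ).choose_spec

end Condition

open Condition

section Diagonalization

variable {ι : Type*} [DecidableEq ι]

noncomputable def diagonalizeAt (B : ι → Condition) (x : Code × ι × ι) : ι → Condition :=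
  Function.update (Function.update B x.2.1 (diagonalize x.1 (B x.2.1) (B x.2.2)).1) x.2.2
    (diagonalize x.1 (B x.2.1) (B x.2.2)).2

theorem le_diagonalizeAt (B : ι → Condition) (x : Code × ι × ι) : B ≤ diagonalizeAt B x := by
  obtain ⟨hp, hq, -⟩ := diagonalize_spec x.1 (B x.2.1) (B x.2.2)
  intro r
  rcases eq_or_ne r x.2.2 with rfl | hrq
  · simpa [diagonalizeAt] using hq
  rcases eq_or_ne r x.2.1 with rfl | hrp
  · simpa [diagonalizeAt, hrq] using hp
  · simp [diagonalizeAt, hrq, hrp]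

theorem diagonalizes_diagonalizeAt (B : ι → Condition) {c : Code} {p q : ι} (hpq : p ≠ q) :
    Diagonalizes c (diagonalizeAt B (c, p, q) p) (diagonalizeAt B (c, p, q) q) := by
  simpa [diagonalizeAt, hpq] using (diagonalize_spec c (B p) (B q)).2.2

theorem le_foldl_diagonalizeAt (l : List (Code × ι × ι)) (B : ι → Condition) :
    B ≤ l.foldl diagonalizeAt B := by
  induction l generalizing B with
  | nil => exact le_rfl
  | cons x l ih => exact (le_diagonalizeAt B x).trans (ih _)

theorem diagonalizes_foldl_diagonalizeAt {l : List (Code × ι × ι)} {c : Code} {p q : ι}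
    (hx : (c, p, q) ∈ l) (hpq : p ≠ q) (B : ι → Condition) :
    Diagonalizes c (l.foldl diagonalizeAt B p) (l.foldl diagonalizeAt B q) := by
  obtain ⟨l₁, l₂, rfl⟩ := List.append_of_mem hx
  rw [List.foldl_append, List.foldl_cons]
  exact (diagonalizes_diagonalizeAt _ hpq).mono (le_foldl_diagonalizeAt _ _ p)
    (le_foldl_diagonalizeAt _ _ q)

end Diagonalization

noncomputable def requirements (t : ℕ) : List (Code × (Fin t → Bool) × (Fin t → Bool)) :=
  (Finset.univ : Finset (Fin t × (Fin t → Bool) × (Fin t → Bool))).toList.map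
    fun x => (Code.enum x.1, x.2)

noncomputable def conditionTree : (t : ℕ) → (Fin t → Bool) → Condition
  | 0 => fun _ => ⟨0, 0⟩
  | t + 1 => fun r => ((requirements t).foldl diagonalizeAt (conditionTree t) (Fin.init r)).lengthen

theorem conditionTree_init_le {t : ℕ} (r : Fin (t + 1) → Bool) :
    conditionTree t (Fin.init r) ≤ conditionTree (t + 1) r :=
  (le_foldl_diagonalizeAt _ _ _).trans (le_lengthen _)

theorem le_conditionTree_len (t : ℕ) (r : Fin t → Bool) : t ≤ (conditionTree t r).len := by
  induction t with
  | zero => exact le_rfl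
  | succ t ih =>
    exact Nat.succ_le_succ ((ih _).trans (len_le_of_le (le_foldl_diagonalizeAt _ _ _)))

theorem diagonalizes_conditionTree {t j : ℕ} (hj : j < t) {r s : Fin (t + 1) → Bool}
    (hrs : Fin.init r ≠ Fin.init s) :
    Diagonalizes (Code.enum j) (conditionTree (t + 1) r) (conditionTree (t + 1) s) :=
  have hx : (Code.enum j, Fin.init r, Fin.init s) ∈ requirements t :=
    List.mem_map.2 ⟨(⟨j, hj⟩, _), Finset.mem_toList.2 (Finset.mem_univ _), rfl⟩
  (diagonalizes_foldl_diagonalizeAt hx hrs _).mono (le_lengthen _) (le_lengthen _)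

noncomputable def branch (X : ℕ → Bool) : ℕ → ℕ := limit fun t => conditionTree t fun i => X i

theorem branch_mem_cyl (X : ℕ → Bool) (t : ℕ) : branch X ∈ (conditionTree t fun i => X i).cyl :=
  limit_mem_cyl (σ := fun t => conditionTree t fun i => X i)
    (monotone_nat_of_le_succ fun _ => conditionTree_init_le fun i => X i)
    (fun t => le_conditionTree_len t _) t

theorem not_turingLe_branch {X Y : ℕ → Bool} (h : X ≠ Y) : ¬ TuringLe (branch X) (branch Y) := by
  intro hle
  obtain ⟨c, hc⟩ := RecursiveIn.exists_code hle
  obtain ⟨j, rfl⟩ := Code.enum_surjective c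
  obtain ⟨i, hi⟩ := Function.ne_iff.1 h
  have hXY : (fun k : Fin (i + j + 1) => X k) ≠ fun k : Fin (i + j + 1) => Y k :=
    fun he => hi (congrFun he ⟨i, by omega⟩)
  exact diagonalizes_conditionTree (by omega) hXY _ (branch_mem_cyl X _) _ (branch_mem_cyl Y _) hc

theorem turingLe_branch_iff {X Y : ℕ → Bool} : TuringLe (branch X) (branch Y) ↔ X = Y :=
  ⟨fun hle => by_contra (not_turingLe_branch · hle), fun h => h ▸ turingLe_refl _⟩

theorem not_muchnikLe_image_of_not_subset {α : Type*} {F : α → ℕ → ℕ}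
    (hF : ∀ a b, TuringLe (F a) (F b) → a = b) {s t : Set α} (h : ¬ t ⊆ s) :
    ¬ MuchnikLe (F '' s) (F '' t) := by
  intro hle
  obtain ⟨x, hxt, hxs⟩ := Set.not_subset.1 h
  obtain ⟨_, ⟨y, hys, rfl⟩, hyx⟩ := hle (F x) ⟨x, hxt, rfl⟩
  exact hxs (hF y x hyx ▸ hys)

/-- There is an antichain of cardinality `2 ^ (2 ^ ℵ₀)` in the Muchnik lattice: a family of
mass problems of that cardinality whose members are pairwise Muchnik incomparable. -/
theorem muchnik_big_antichain :
    ∃ ℱ : Set (Set (ℕ → ℕ)), #ℱ = (2 : Cardinal) ^ ((2 : Cardinal) ^ Cardinal.aleph0) ∧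
      ∀ A ∈ ℱ, ∀ B ∈ ℱ, A ≠ B → ¬ MuchnikLe A B ∧ ¬ MuchnikLe B A := by
  have hF : ∀ X Y, TuringLe (branch X) (branch Y) → X = Y := fun _ _ => turingLe_branch_iff.1
  have hinj : Function.Injective (Set.image branch) :=
    Set.image_injective.2 fun X Y h => hF X Y (h ▸ turingLe_refl _)
  obtain ⟨𝒜, h𝒜card, h𝒜⟩ := Set.exists_isAntichain_card_eq_two_pow (ℕ → Bool)
  refine ⟨Set.image branch '' 𝒜, ?_, ?_⟩
  · rw [Cardinal.mk_image_eq hinj, h𝒜card]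
    simp
  · rintro _ ⟨s, hs, rfl⟩ _ ⟨t, ht, rfl⟩ hst
    have hne : s ≠ t := by rintro rfl; exact hst rfl
    exact ⟨not_muchnikLe_image_of_not_subset hF (h𝒜 ht hs hne.symm),
      not_muchnikLe_image_of_not_subset hF (h𝒜 hs ht hne)⟩

end Muchnik
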